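/- Let γ > 1 and v₋ > 0, and let Q(v) = v^{1-γ}/(γ-1). There exists a constant C > 0 such that for all real numbers v, w with 0 < w < 2v₋ and 0 < v ≤ 3v₋, one has (v - w)² ≤ C · Q(v|w). -/

import Mathlib

open Set

/-- Relative internal energy inequality: for `γ > 1`, `v₋ > 0`, with
`Q(v) = v^(1-γ)/(γ-1)` and relative quantity
`Q(v|w) = (v^(1-γ) - w^(1-γ))/(γ-1) + w^(-γ)(v-w)`, there is `C > 0` with
`(v-w)² ≤ C Q(v|w)` whenever `0 < w < 2v₋` and `0 < v ≤ 3v₋`. -/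
theorem stmt_0 (γ vminus : ℝ) (hγ : 1 < γ) (hv : 0 < vminus) :
    ∃ C > 0, ∀ v w : ℝ, 0 < w → w < 2 * vminus → 0 < v → v ≤ 3 * vminus →
      (v - w) ^ 2 ≤ C * ((v ^ (1 - γ) - w ^ (1 - γ)) / (γ - 1) + w ^ (-γ) * (v - w)) := by
  set b : ℝ := 4 * vminus with hbdef
  have hb : (0:ℝ) < b := by positivity
  set m : ℝ := γ * b ^ (-γ - 1) with hmdef
  have hm : 0 < m := by
    have := Real.rpow_pos_of_pos hb (-γ - 1)
    positivity
  set f : ℝ → ℝ := fun x => x ^ (1 - γ) / (γ - 1) - m / 2 * x ^ 2 with hfdef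
  set f' : ℝ → ℝ := fun x => -x ^ (-γ) - m * x with hf'def
  have hγ0 : γ - 1 ≠ 0 := by linarith
  have hder : ∀ x : ℝ, 0 < x → HasDerivAt f (f' x) x := by
    intro x hx
    have h1 : HasDerivAt (fun y : ℝ => y ^ (1 - γ)) ((1 - γ) * x ^ (1 - γ - 1)) x :=
      Real.hasDerivAt_rpow_const (Or.inl hx.ne')
    have h2 := (h1.div_const (γ - 1)).sub ((hasDerivAt_pow 2 x).const_mul (m / 2))
    refine h2.congr_deriv ?_
    have he : 1 - γ - 1 = -γ := by ring
    rw [he]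
    field_simp
    ring
  have hder' : ∀ x : ℝ, 0 < x → HasDerivAt f' (γ * x ^ (-γ - 1) - m) x := by
    intro x hx
    have h1 : HasDerivAt (fun y : ℝ => y ^ (-γ)) (-γ * x ^ (-γ - 1)) x :=
      Real.hasDerivAt_rpow_const (Or.inl hx.ne')
    have h2 := h1.neg.sub ((hasDerivAt_id x).const_mul m)
    refine h2.congr_deriv ?_
    ring
  have hconv : ConvexOn ℝ (Ioo 0 b) f := by
    apply convexOn_of_hasDerivWithinAt2_nonneg (f' := f') (f'' := fun x => γ * x ^ (-γ - 1) - m)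
      (convex_Ioo 0 b)
    · exact fun x hx => (hder x hx.1).continuousAt.continuousWithinAt
    · rw [interior_Ioo]
      exact fun x hx => (hder x hx.1).hasDerivWithinAt
    · rw [interior_Ioo]
      exact fun x hx => (hder' x hx.1).hasDerivWithinAt
    · rw [interior_Ioo]
      intro x hx
      have hle : b ^ (-γ - 1) ≤ x ^ (-γ - 1) :=
        Real.rpow_le_rpow_of_nonpos hx.1 hx.2.le (by linarith)
      have : m ≤ γ * x ^ (-γ - 1) := by
        rw [hmdef]
        exact mul_le_mul_of_nonneg_left hle (by linarith)
      linarith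
  have htang : ∀ v w : ℝ, v ∈ Ioo (0:ℝ) b → w ∈ Ioo (0:ℝ) b →
      f' w * (v - w) ≤ f v - f w := by
    intro v w hvS hwS
    rcases lt_trichotomy v w with h | h | h
    · have := hconv.slope_le_of_hasDerivAt hvS hwS h (hder w hwS.1)
      rw [slope_def_field] at this
      have hpos : 0 < w - v := by linarith
      rw [div_le_iff₀ hpos] at this
      nlinarith
    · subst h; simp
    · have := hconv.le_slope_of_hasDerivAt hwS hvS h (hder w hwS.1)
      rw [slope_def_field] at this
      have hpos : 0 < v - w := by linarith
      rw [le_div_iff₀ hpos] at this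
      nlinarith
  refine ⟨2 / m, by positivity, ?_⟩
  intro v w hw hw2 hv0 hv3
  have hvS : v ∈ Ioo (0:ℝ) b := ⟨hv0, by rw [hbdef]; linarith⟩
  have hwS : w ∈ Ioo (0:ℝ) b := ⟨hw, by rw [hbdef]; linarith⟩
  have h := htang v w hvS hwS
  set Q : ℝ := (v ^ (1 - γ) - w ^ (1 - γ)) / (γ - 1) + w ^ (-γ) * (v - w) with hQdef
  have hQ : m / 2 * (v - w) ^ 2 ≤ Q := by
    have hexp : f v - f w - f' w * (v - w) = Q - m / 2 * (v - w) ^ 2 := by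
      rw [hfdef, hf'def, hQdef]
      field_simp
      ring
    have h0 : 0 ≤ f v - f w - f' w * (v - w) := by linarith
    rw [hexp] at h0
    linarith
  calc (v - w) ^ 2 = 2 / m * (m / 2 * (v - w) ^ 2) := by field_simp
    _ ≤ 2 / m * Q := mul_le_mul_of_nonneg_left hQ (by positivity)
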